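/- arXiv:0904.4216 — 2 statements merged into one kernel-verified Lean document; each statement's English description precedes it below -/
import Mathlib

section
/- Let A be a Noetherian commutative ring and 𝒫 a prime ideal. The sequence of lengths ℓ_{A_𝒫}(A_𝒫 / 𝒫ⁿ A_𝒫), n ≥ 1, is bounded if and only if 𝒫 is a minimal prime ideal of A. -/
/-!
Localizing at `𝒫` gives a Noetherian local ring `R = A_𝒫` with maximal ideal `𝔪 = 𝒫 A_𝒫`,
and `𝒫` is minimal iff `dim R = 0` iff `R` is Artinian. If `R` is Artinian, every `ℓ(R ⧸ 𝔪ⁿ)` is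
at most `ℓ(R) < ∞`. Conversely, if `ℓ(R ⧸ 𝔪^(C+1)) ≤ C`, the chain `𝔪⁰ ⊇ ⋯ ⊇ 𝔪^(C+1)` cannot be
strict, so `𝔪ⁱ = 𝔪ⁱ⁺¹` for some `i`; Nakayama gives `𝔪ⁱ = 0`, and `R` is Artinian.
For Noetherian modules the ordinal length `olength` agrees with `Module.length` at finite values,
since the rank under `>` and the coheight obey the same recursion over strictly larger submodules.
-/

open scoped Classical

universe u

/-- The ordinal-valued (Krull) length of a module: the rank of `⊥` in the well-founded
relation `>` on submodules; defined to be `0` when the relation is not accessible at `⊥`. -/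
noncomputable def olength (A : Type u) [CommRing A] (M : Type u) [AddCommGroup M]
    [Module A M] : Ordinal :=
  if h : Acc (α := Submodule A M) (· > ·) ⊥ then h.rank else 0

open Order

section Rank

variable {α : Type u} [Preorder α] [WellFoundedGT α]

lemma IsWellFounded.rank_gt_le_iff (x : α) (o : Ordinal) :
    rank (α := α) (· > ·) x ≤ o ↔ ∀ y > x, rank (α := α) (· > ·) y < o := by
  rw [rank_eq, Ordinal.iSup_le_iff, Subtype.forall]
  simp only [Order.succ_le_iff]

lemma IsWellFounded.rank_gt_lt_natCast_iff (n : ℕ) (x : α) :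
    rank (α := α) (· > ·) x < n ↔ coheight x < n := by
  induction n generalizing x with
  | zero => simp
  | succ n ih =>
    rw [Nat.cast_succ, Order.lt_add_one_iff, rank_gt_le_iff, Nat.cast_succ,
      ENat.lt_add_one_iff (ENat.natCast_ne_top n), coheight_le_coe_iff]
    simp only [ih]

lemma IsWellFounded.rank_gt_le_natCast_iff (n : ℕ) (x : α) :
    rank (α := α) (· > ·) x ≤ n ↔ coheight x ≤ n := by
  rw [← Order.lt_add_one_iff, ← Nat.cast_succ, rank_gt_lt_natCast_iff, Nat.cast_succ,
    ENat.lt_add_one_iff (ENat.natCast_ne_top n)]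

end Rank

lemma olength_le_natCast_iff (A : Type u) [CommRing A] (M : Type u) [AddCommGroup M]
    [Module A M] [IsNoetherian A M] (n : ℕ) :
    olength A M ≤ n ↔ Module.length A M ≤ n := by
  rw [olength, dif_pos (IsWellFounded.apply _ ⊥), Module.length_eq_coheight,
    ← IsWellFounded.rank_gt_le_natCast_iff]
  rfl

lemma Order.natCast_le_coheight_of_forall_lt {α : Type*} [Preorder α] (f : ℕ → α) (n : ℕ)
    (hf : ∀ i < n, f (i + 1) < f i) : (n : ℕ∞) ≤ coheight (f n) := by
  induction n with
  | zero => simp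
  | succ n ih =>
    calc ((n + 1 : ℕ) : ℕ∞) = n + 1 := by push_cast; rfl
      _ ≤ coheight (f n) + 1 := by gcongr; exact ih fun i hi => hf i (by omega)
      _ ≤ coheight (f (n + 1)) := coheight_add_one_le (hf n n.lt_succ_self)

namespace Ideal

variable {R : Type*} [CommRing R]

lemma exists_pow_succ_eq_of_length_quotient_pow_lt (I : Ideal R) {n : ℕ}
    (h : Module.length R (R ⧸ I ^ n) < n) : ∃ i < n, I ^ (i + 1) = I ^ i := by
  by_contra! hne
  have hlt : ∀ i < n, I ^ (i + 1) < I ^ i := fun i hi =>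
    (Ideal.pow_le_pow_right i.le_succ).lt_of_ne (hne i hi)
  rw [Module.length_quotient] at h
  exact h.not_ge (natCast_le_coheight_of_forall_lt (fun i => (I ^ i : Submodule R R)) n hlt)

lemma pow_eq_bot_of_pow_succ_eq [IsNoetherianRing R] {I : Ideal R} (hI : I ≤ jacobson ⊥) {i : ℕ}
    (h : I ^ (i + 1) = I ^ i) : I ^ i = ⊥ :=
  Submodule.eq_bot_of_le_smul_of_le_jacobson_bot I _ (IsNoetherian.noetherian _)
    (by rw [smul_eq_mul, ← pow_succ', h]) hI

end Ideal

lemma IsLocalRing.isArtinianRing_of_length_quotient_pow_lt {R : Type*} [CommRing R]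
    [IsNoetherianRing R] [IsLocalRing R] {n : ℕ}
    (h : Module.length R (R ⧸ maximalIdeal R ^ n) < n) : IsArtinianRing R := by
  obtain ⟨i, -, hi⟩ := (maximalIdeal R).exists_pow_succ_eq_of_length_quotient_pow_lt h
  exact (isArtinianRing_iff_isNilpotent_maximalIdeal R).mpr
    ⟨i, Ideal.pow_eq_bot_of_pow_succ_eq (maximalIdeal_le_jacobson ⊥) hi⟩

lemma Localization.AtPrime.isArtinianRing_iff_mem_minimalPrimes {A : Type*} [CommRing A]
    [IsNoetherianRing A] (P : Ideal A) [P.IsPrime] :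
    IsArtinianRing (Localization.AtPrime P) ↔ P ∈ minimalPrimes A := by
  rw [isArtinianRing_iff_krullDimLE_zero, ringKrullDimZero_iff_ringKrullDim_eq_zero,
    IsLocalization.AtPrime.ringKrullDim_eq_height P, ← Ideal.height_eq_zero_iff]
  norm_cast

/-- For a prime `𝒫` of a Noetherian commutative ring `A`, the sequence of lengths
`ℓ(A_𝒫 / 𝒫ⁿ A_𝒫)` is bounded if and only if `𝒫` is a minimal prime of `A`. -/
theorem length_quotient_pow_bounded_iff_minimalPrime
    (A : Type u) [CommRing A] [IsNoetherianRing A] (P : Ideal A) [P.IsPrime] :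
    (∃ C : ℕ, ∀ n : ℕ, 1 ≤ n →
      olength (Localization.AtPrime P)
        (Localization.AtPrime P ⧸
          (P.map (algebraMap A (Localization.AtPrime P))) ^ n) ≤ (C : Ordinal)) ↔
      P ∈ minimalPrimes A := by
  rw [Localization.AtPrime.map_eq_maximalIdeal,
    ← Localization.AtPrime.isArtinianRing_iff_mem_minimalPrimes]
  simp only [olength_le_natCast_iff]
  constructor
  · rintro ⟨C, hC⟩
    exact IsLocalRing.isArtinianRing_of_length_quotient_pow_lt (n := C + 1)
      ((hC _ le_add_self).trans_lt (by norm_cast; omega))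
  · intro _
    obtain ⟨C, hC⟩ := WithTop.ne_top_iff_exists.mp
      (Module.length_ne_top (R := Localization.AtPrime P) (M := Localization.AtPrime P))
    exact ⟨C, fun n _ =>
      (Module.length_le_of_surjective _ (Submodule.mkQ_surjective _)).trans hC.ge⟩
end

section
/- Let A be a Noetherian commutative ring, M a nonzero Noetherian A-module with an associated prime 𝒫 of coheight 0 (i.e., 𝒫 maximal). Then M has a submodule K isomorphic to A/𝒫 of length 1, and for any such K, every proper quotient of M either has the form M/K or factors appropriately; in particular ℓ(M) = ℓ(M/K) + 1 where ℓ denotes the ordinal-valued length defined by ℓ(M) = sup{ℓ(N)+1 : N a proper quotient of M}. -/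
/-!
In terms of the well-founded order `>` on submodules, `ℓ(M)` is the rank of `⊥` and `ℓ(M/K)`
is the rank of `K`, because submodules of `M/K` are the submodules of `M` above `K` and their
predecessors for `>` are again above `K`. An associated prime `𝒫` gives an embedding
`A/𝒫 ↪ M`; when `𝒫` is maximal its image `K` is simple, i.e. an atom of the submodule lattice.
For an atom `K` and any `N` with `K ⊓ N = ⊥`, modularity gives `rank N = rank (K ⊔ N) + 1` by
well-founded induction on `N`: a submodule `L > N` either contains `K`, hence `K ⊔ N`, or is
again disjoint from `K`, and then `K ⊔ N < K ⊔ L`. Taking `N = ⊥` gives `ℓ(M) = ℓ(M/K) + 1`.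
-/

open scoped Classical

universe u

open Order

theorem IsWellFounded.rank_apply_eq_of_lift {α β : Type u} {r : α → α → Prop}
    {s : β → β → Prop} [IsWellFounded α r] [IsWellFounded β s] (f : α → β)
    (map_rel : ∀ a b, r b a → s (f b) (f a))
    (lift_rel : ∀ a c, s c (f a) → ∃ b, r b a ∧ f b = c) (a : α) :
    rank s (f a) = rank r a := by
  induction a using IsWellFounded.induction r with
  | _ a ih =>
    rw [rank_eq r a, rank_eq s (f a)]
    apply le_antisymm
    · refine Ordinal.iSup_le fun ⟨c, hc⟩ => ?_
      obtain ⟨b, hb, rfl⟩ := lift_rel a c hc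
      rw [ih b hb]
      exact Ordinal.le_iSup (fun b : {b // r b a} => succ (rank r b.1)) ⟨b, hb⟩
    · refine Ordinal.iSup_le fun ⟨b, hb⟩ => ?_
      rw [← ih b hb]
      exact Ordinal.le_iSup (fun c : {c // s c (f a)} => succ (rank s c.1)) ⟨f b, map_rel a b hb⟩

theorem Submodule.rank_gt_comap_mkQ {R : Type*} {M : Type u} [Ring R] [AddCommGroup M]
    [Module R M] [IsNoetherian R M] (p : Submodule R M) (q : Submodule R (M ⧸ p)) :
    IsWellFounded.rank (· > ·) (q.comap p.mkQ) = IsWellFounded.rank (· > ·) q := by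
  refine IsWellFounded.rank_apply_eq_of_lift (r := (· > ·)) (s := (· > ·)) (comap p.mkQ)
    (fun _ _ h => comap_strictMono_of_surjective p.mkQ_surjective h) (fun a c hc => ?_) q
  have hpc : p ≤ c := by simpa using (LinearMap.ker_le_comap (p := a) p.mkQ).trans hc.le
  have hc' : (c.map p.mkQ).comap p.mkQ = c := by rw [comap_map_mkQ, sup_eq_right.mpr hpc]
  exact ⟨c.map p.mkQ, (comap_lt_comap_iff_of_surjective p.mkQ_surjective).mp (by rwa [hc']), hc'⟩

theorem IsAtom.rank_gt_eq_succ_rank_gt_sup {α : Type*} [Lattice α] [OrderBot α]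
    [IsModularLattice α] [WellFoundedGT α] {a : α} (ha : IsAtom a) {b : α} (hab : Disjoint a b) :
    IsWellFounded.rank (· > ·) b = succ (IsWellFounded.rank (· > ·) (a ⊔ b)) := by
  induction b using WellFoundedGT.induction with
  | _ b ih =>
    have hb_lt : b < a ⊔ b := lt_of_le_of_ne le_sup_right fun h =>
      ha.1 (hab.eq_bot_of_le (h ▸ le_sup_left))
    refine le_antisymm ?_ (succ_le_of_lt (IsWellFounded.rank_lt_of_rel hb_lt))
    rw [IsWellFounded.rank_eq (· > ·) b]
    refine Ordinal.iSup_le fun ⟨c, (hbc : b < c)⟩ => succ_le_succ ?_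
    by_cases hac : a ≤ c
    · exact WellFoundedGT.rank_strictAnti.antitone (sup_le hac hbc.le)
    · have hac : Disjoint a c := ha.not_le_iff_disjoint.mp hac
      have hsup : a ⊔ b < a ⊔ c := by
        simpa only [sup_comm a] using sup_lt_sup_of_lt_of_inf_le_inf hbc
          (by rw [inf_comm, hac.eq_bot]; exact bot_le)
      rw [ih c hbc hac]
      exact succ_le_of_lt (IsWellFounded.rank_lt_of_rel hsup)

theorem olength_eq_rank_bot (A : Type u) [CommRing A] (M : Type u) [AddCommGroup M] [Module A M]
    [IsNoetherian A M] :
    olength A M = IsWellFounded.rank (α := Submodule A M) (· > ·) ⊥ := by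
  rw [olength, dif_pos ((IsWellFounded.wf (r := (· > ·))).apply _)]
  rfl

theorem olength_eq_olength_quotient_add_one {A : Type u} [CommRing A] {M : Type u}
    [AddCommGroup M] [Module A M] [IsNoetherian A M] {K : Submodule A M} (hK : IsAtom K) :
    olength A M = olength A (M ⧸ K) + 1 := by
  rw [olength_eq_rank_bot, olength_eq_rank_bot, ← succ_eq_add_one,
    hK.rank_gt_eq_succ_rank_gt_sup disjoint_bot_right, sup_bot_eq, ← K.rank_gt_comap_mkQ ⊥,
    Submodule.comap_bot, Submodule.ker_mkQ]

theorem olength_eq_succ_of_maximal_associatedPrime_general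
    (A : Type u) [CommRing A] [IsNoetherianRing A]
    (M : Type u) [AddCommGroup M] [Module A M] [IsNoetherian A M]
    (P : Ideal A) (hmax : P.IsMaximal) (hP : P ∈ associatedPrimes A M) :
    (∃ K : Submodule A M, Nonempty (↥K ≃ₗ[A] A ⧸ P)) ∧
      ∀ K : Submodule A M, Nonempty (↥K ≃ₗ[A] A ⧸ P) →
        IsSimpleModule A ↥K ∧ olength A M = olength A (M ⧸ K) + 1 := by
  refine ⟨?_, fun K ⟨e⟩ => ?_⟩
  · obtain ⟨-, f, hf⟩ := (isAssociatedPrime_iff_exists_injective_linearMap P M).mp hP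
    exact ⟨LinearMap.range f, ⟨(LinearEquiv.ofInjective f hf).symm⟩⟩
  · have hK : IsSimpleModule A K := isSimpleModule_iff_quot_maximal.mpr ⟨P, hmax, ⟨e⟩⟩
    exact ⟨hK, olength_eq_olength_quotient_add_one (isSimpleModule_iff_isAtom.mp hK)⟩

/-- If a nonzero Noetherian module `M` over a Noetherian ring has a maximal associated
prime `𝒫` (coheight zero), then `M` has a submodule `K ≅ A/𝒫`; any such `K` is simple
(length one) and `ℓ(M) = ℓ(M/K) + 1`. -/
theorem olength_eq_succ_of_maximal_associatedPrime
    (A : Type u) [CommRing A] [IsNoetherianRing A]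
    (M : Type u) [AddCommGroup M] [Module A M] [IsNoetherian A M] [Nontrivial M]
    (P : Ideal A) (hmax : P.IsMaximal) (hP : P ∈ associatedPrimes A M) :
    (∃ K : Submodule A M, Nonempty (↥K ≃ₗ[A] A ⧸ P)) ∧
      ∀ K : Submodule A M, Nonempty (↥K ≃ₗ[A] A ⧸ P) →
        IsSimpleModule A ↥K ∧ olength A M = olength A (M ⧸ K) + 1 :=
  olength_eq_succ_of_maximal_associatedPrime_general A M P hmax hP
end
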